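/- Let k be a field of characteristic zero and π : X → G an augmented rack. Let H := k[G], let M be the free k-module on G × X with the H-bimodule structure extending of(g)·(h, x) = (gh, x) and (h, x)·of(g) = (hg, x^g), and let φ : M → H be the k-linear map with φ(h, x) = of(h π(x)) − of(h). Let S₀ : H → H be the antipode of the group algebra (of(g) ↦ of(g⁻¹)) and let S₁ : M → M be the k-linear map with S₁(h, x) = −((h π(x))⁻¹, x^{(h π(x))⁻¹}). Then: (i) φ ∘ S₁ = S₀ ∘ φ; (ii) for every (h, x) ∈ G × X, S₁(h, x) · of(h π(x)) + of(h⁻¹) · (h, x) = 0 in M; (iii) for every (h, x) ∈ G × X, (h, x) · of((h π(x))⁻¹) + of(h) · S₁(h, x) = 0 in M. (These are the antipode identities making (M → H) a Hopf algebra in the Loday-Pirashvili category.) -/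

import Mathlib

noncomputable section

variable {k : Type*} [Field k] [CharZero k] {G : Type*} [Group G] {X : Type*}

/-- Left action of `g ∈ G` on the free module `M = k[G × X]`, extending
`of g · (h, x) = (g h, x)`. -/
def Lg (k : Type*) [Field k] {G : Type*} [Group G] {X : Type*} (g : G) :
    ((G × X) →₀ k) →ₗ[k] ((G × X) →₀ k) :=
  Finsupp.lmapDomain k k fun a : G × X => (g * a.1, a.2)

/-- Right action of `g ∈ G` on the free module `M = k[G × X]`, extending
`(h, x) · of g = (h g, x ^ g)`. -/
def Rg (k : Type*) [Field k] {G : Type*} [Group G] {X : Type*}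
    (act : X → G → X) (g : G) : ((G × X) →₀ k) →ₗ[k] ((G × X) →₀ k) :=
  Finsupp.lmapDomain k k fun a : G × X => (a.1 * g, act a.2 g)

/-- The `k`-linear map `φ : M → H = k[G]` with `φ (h, x) = of (h π x) − of h`. -/
def phi (k : Type*) [Field k] {G : Type*} [Group G] {X : Type*} (π : X → G) :
    ((G × X) →₀ k) →ₗ[k] MonoidAlgebra k G :=
  Finsupp.lift (MonoidAlgebra k G) k (G × X) fun a =>
    MonoidAlgebra.of k G (a.1 * π a.2) - MonoidAlgebra.of k G a.1

/-- The antipode `S₀` of the group algebra, `of g ↦ of g⁻¹`. -/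
def S0 (k : Type*) [Field k] (G : Type*) [Group G] :
    MonoidAlgebra k G →ₗ[k] MonoidAlgebra k G :=
  (Finsupp.lift (MonoidAlgebra k G) k G fun g => MonoidAlgebra.of k G g⁻¹) ∘ₗ
    (MonoidAlgebra.coeffLinearEquiv k).toLinearMap

/-- The map `S₁ : M → M`, `(h, x) ↦ −((h π x)⁻¹, x ^ (h π x)⁻¹)`. -/
def S1 (k : Type*) [Field k] {G : Type*} [Group G] {X : Type*}
    (act : X → G → X) (π : X → G) : ((G × X) →₀ k) →ₗ[k] ((G × X) →₀ k) :=
  Finsupp.lift ((G × X) →₀ k) k (G × X) fun a =>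
    -Finsupp.single ((a.1 * π a.2)⁻¹, act a.2 (a.1 * π a.2)⁻¹) 1
set_option linter.unusedSectionVars false

lemma S1_single (act : X → G → X) (π : X → G) (h : G) (x : X) :
    S1 k act π (Finsupp.single ((h, x) : G × X) 1) =
      -Finsupp.single ((h * π x)⁻¹, act x (h * π x)⁻¹) 1 := by
  simp [S1]

lemma phi_single (π : X → G) (h : G) (x : X) :
    phi k π (Finsupp.single ((h, x) : G × X) 1) =
      MonoidAlgebra.of k G (h * π x) - MonoidAlgebra.of k G h := by
  simp [phi]

lemma S0_single (g : G) (c : k) :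
    S0 k G (MonoidAlgebra.single g c) = MonoidAlgebra.single g⁻¹ c := by
  simp [S0, MonoidAlgebra.coeffLinearEquiv, MonoidAlgebra.of_apply, MonoidAlgebra.smul_single]

lemma Rg_single (act : X → G → X) (g h : G) (x : X) (c : k) :
    Rg k act g (Finsupp.single ((h, x) : G × X) c) =
      Finsupp.single ((h * g, act x g) : G × X) c := by
  simp [Rg, Finsupp.mapDomain_single]

lemma Lg_single (g h : G) (x : X) (c : k) :
    Lg k g (Finsupp.single ((h, x) : G × X) c) =
      Finsupp.single ((g * h, x) : G × X) c := by
  simp [Lg, Finsupp.mapDomain_single]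
/-- For an augmented rack `π : X → G`, with `H = k[G]`,
`M = k[G × X]` an `H`-bimodule as above, `φ(h,x) = of (h π x) − of h`, the antipode
`S₀ : of g ↦ of g⁻¹` of `H` and `S₁(h,x) = −((h π x)⁻¹, x ^ (h π x)⁻¹)`:
(i) `φ ∘ S₁ = S₀ ∘ φ`; (ii) `S₁(h,x) · of (h π x) + of h⁻¹ · (h,x) = 0`;
(iii) `(h,x) · of (h π x)⁻¹ + of h · S₁(h,x) = 0`.  These are the antipode identities
making `(M → H)` a Hopf algebra in the Loday–Pirashvili category. -/

theorem augmentedRack_antipode_identities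
    (act : X → G → X)
    (act_one : ∀ x, act x 1 = x)
    (act_mul : ∀ (x : X) (g h : G), act (act x g) h = act x (g * h))
    (π : X → G)
    (π_act : ∀ (x : X) (g : G), π (act x g) = g⁻¹ * π x * g) :
    -- (i)
    ((phi k π).comp (S1 k act π) = (S0 k G).comp (phi k π)) ∧
    -- (ii)
    (∀ (h : G) (x : X),
        Rg k act (h * π x) (S1 k act π (Finsupp.single ((h, x) : G × X) 1)) +
            Lg k h⁻¹ (Finsupp.single ((h, x) : G × X) (1 : k)) = 0) ∧
    -- (iii)
    (∀ (h : G) (x : X),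
        Rg k act (h * π x)⁻¹ (Finsupp.single ((h, x) : G × X) (1 : k)) +
            Lg k h (S1 k act π (Finsupp.single ((h, x) : G × X) 1)) = 0) := by
  refine ⟨?_, ?_, ?_⟩
  · apply Finsupp.lhom_ext'
    intro a
    apply LinearMap.ext_ring
    obtain ⟨h, x⟩ := a
    have key : (h * π x)⁻¹ * π (act x (h * π x)⁻¹) = h⁻¹ := by
      rw [π_act]; group
    simp only [LinearMap.comp_apply, Finsupp.lsingle_apply]
    rw [S1_single, map_neg, phi_single, key, phi_single, map_sub,
      show MonoidAlgebra.of k G (h * π x) = MonoidAlgebra.single (h * π x) (1:k) from rfl,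
      show MonoidAlgebra.of k G h = MonoidAlgebra.single h (1:k) from rfl,
      show MonoidAlgebra.of k G h⁻¹ = MonoidAlgebra.single h⁻¹ (1:k) from rfl,
      show MonoidAlgebra.of k G (h * π x)⁻¹ = MonoidAlgebra.single (h * π x)⁻¹ (1:k) from rfl,
      S0_single, S0_single]
    abel
  · intro h x
    rw [S1_single, map_neg, Rg_single, Lg_single, act_mul, inv_mul_cancel,
      inv_mul_cancel, act_one]
    abel
  · intro h x
    rw [S1_single, map_neg, Rg_single, Lg_single]
    abel

end
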